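/- For every real x > 0, 2e^{2x} − e^x(x³ − x² + 4x + 4) + x² + 4x + 2 > 0. -/
import Mathlib

/-- For every real `x > 0`, `2e^{2x} - e^x(x³ - x² + 4x + 4) + x² + 4x + 2 > 0`. -/
theorem exp_ineq_12 (x : ℝ) (hx : 0 < x) :
    0 < 2 * Real.exp (2 * x) - Real.exp x * (x ^ 3 - x ^ 2 + 4 * x + 4) +
        x ^ 2 + 4 * x + 2 := by
  have h := Real.sum_le_exp_of_nonneg hx.le 6
  simp [Finset.sum_range_succ] at h
  norm_num [Nat.factorial] at h
  have h2 : Real.exp (2 * x) = Real.exp x ^ 2 := by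
    rw [two_mul, Real.exp_add]; ring
  rw [h2]
  have hts : 1 + x + x ^ 2 / 2 + x ^ 3 / 6 + x ^ 4 / 24 < Real.exp x := by
    nlinarith [pow_pos hx 5]
  have hB : 0 < 2 * Real.exp x + 2 * (1 + x + x ^ 2 / 2 + x ^ 3 / 6 + x ^ 4 / 24)
      - (x ^ 3 - x ^ 2 + 4 * x + 4) := by
    nlinarith [sq_nonneg (x - 1), pow_pos hx 4, pow_pos hx 2]
  have key : 2 * Real.exp x ^ 2 - Real.exp x * (x ^ 3 - x ^ 2 + 4 * x + 4) +
      x ^ 2 + 4 * x + 2 =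
      (Real.exp x - (1 + x + x ^ 2 / 2 + x ^ 3 / 6 + x ^ 4 / 24)) *
        (2 * Real.exp x + 2 * (1 + x + x ^ 2 / 2 + x ^ 3 / 6 + x ^ 4 / 24)
          - (x ^ 3 - x ^ 2 + 4 * x + 4)) +
        (x ^ 3 * (x - 2)) ^ 2 / 288 := by ring
  rw [key]
  have := mul_pos (sub_pos.mpr hts) hB
  positivity
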